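/- arXiv:2506.02793 — 2 statements merged into one kernel-verified Lean document; each statement's English description precedes it below -/
import Mathlib

section
/- Let H be a separable Hilbert space and let ξ₁, …, ξ_n be i.i.d. H-valued random variables with ‖ξ_i‖_H ≤ κ almost surely, for a finite constant κ > 0. Then for every δ ∈ (0,1), with probability at least 1 − δ, ‖(1/n) Σ_{i=1}^n ξ_i − E[ξ₁]‖_H ≤ 4 κ log(2/δ) / √n. In particular, the empirical kernel mean embedding μ̂ = (1/n) Σ φ(z_i) of i.i.d. samples z_i, built from a bounded feature map φ with sup ‖φ(z)‖ ≤ κ, satisfies ‖μ̂ − E[φ(Z)]‖_H ≤ 4κ log(2/δ)/√n with probability at least 1 − δ. -/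
/-!
Pinelis' argument. The map `s ↦ cosh (l * √s)` is convex on `[0, ∞)`, and for `‖y‖ ≤ b` the
number `‖x‖² + b² + 2⟪x, y⟫ ≥ ‖x + y‖²` is a convex combination of `(‖x‖ + b)²` and
`(‖x‖ - b)²` whose weights are affine in `⟪x, y⟫`. This gives
`cosh (l‖x + y‖) ≤ cosh (l‖x‖) cosh (l b) + ⟪x, y⟫ · c(x)`, whose last term integrates to zero
against a centred `y`. By independence, `E cosh (l ‖Y₁ + ⋯ + Yₙ‖) ≤ cosh (l b)ⁿ ≤ exp (n l² b² / 2)`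
for the centred variables `Yᵢ = ξᵢ - E ξ₁`, `b = 2κ`, and Markov's inequality with the optimal `l`
gives `P (‖Y₁ + ⋯ + Yₙ‖ > r) ≤ 2 exp (-r² / (2 n b²))`. For `r = 4 κ √n log (2/δ)` the right-hand
side is `2 exp (-2 log² (2/δ)) ≤ δ`.
-/

open MeasureTheory ProbabilityTheory Real Set
open scoped RealInnerProductSpace

lemma cosh_mul_le_cosh_mul {l x y : ℝ} (hl : 0 ≤ l) (hx : 0 ≤ x) (hxy : x ≤ y) :
    cosh (l * x) ≤ cosh (l * y) :=
  cosh_strictMonoOn.monotoneOn (mul_nonneg hl hx) (mul_nonneg hl (hx.trans hxy))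
    (mul_le_mul_of_nonneg_left hxy hl)

lemma convexOn_sinh_Ici : ConvexOn ℝ (Ici 0) sinh := by
  refine MonotoneOn.convexOn_of_deriv (convex_Ici 0) continuous_sinh.continuousOn
    differentiable_sinh.differentiableOn ?_
  rw [Real.deriv_sinh, interior_Ici]
  exact cosh_strictMonoOn.monotoneOn.mono Ioi_subset_Ici_self

lemma monotoneOn_sinh_div_self : MonotoneOn (fun x => sinh x / x) (Ioi 0) := by
  intro x hx y hy hxy
  simpa using convexOn_sinh_Ici.secant_mono self_mem_Ici (mem_Ici.2 (le_of_lt hx))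
    (mem_Ici.2 (le_of_lt hy)) (ne_of_gt hx) (ne_of_gt hy) hxy

lemma convexOn_cosh_mul_sqrt {l : ℝ} (hl : 0 ≤ l) :
    ConvexOn ℝ (Ici 0) fun s => cosh (l * √s) := by
  rcases hl.eq_or_lt with rfl | hl
  · simpa using convexOn_const (1 : ℝ) (convex_Ici 0)
  have hderiv (s : ℝ) (hs : s ∈ interior (Ici 0)) : HasDerivAt (fun s => cosh (l * √s))
      (l ^ 2 / 2 * (sinh (l * √s) / (l * √s))) s := by
    rw [interior_Ici, mem_Ioi] at hs
    convert ((hasDerivAt_sqrt hs.ne').const_mul l).cosh using 1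
    field_simp
  refine MonotoneOn.convexOn_of_deriv (convex_Ici 0) (by fun_prop)
    (fun s hs => (hderiv s hs).differentiableAt.differentiableWithinAt) ?_
  intro s hs t ht hst
  rw [(hderiv s hs).deriv, (hderiv t ht).deriv]
  rw [interior_Ici] at hs ht
  refine mul_le_mul_of_nonneg_left ?_ (by positivity)
  exact monotoneOn_sinh_div_self (mul_pos hl (sqrt_pos.2 hs)) (mul_pos hl (sqrt_pos.2 ht))
    (by gcongr)

lemma cosh_mul_sqrt_le {l a b c : ℝ} (hl : 0 ≤ l) (ha : 0 < a) (hb : 0 < b)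
    (hc : |c| ≤ a * b) :
    cosh (l * √(a ^ 2 + b ^ 2 + 2 * c)) ≤
      cosh (l * a) * cosh (l * b) + c * (sinh (l * a) * sinh (l * b) / (a * b)) := by
  obtain ⟨hc₁, hc₂⟩ := abs_le.1 hc
  obtain ⟨θ, hθ⟩ : ∃ θ, θ = (a * b + c) / (2 * (a * b)) := ⟨_, rfl⟩
  have hθ₀ : 0 ≤ θ := hθ ▸ div_nonneg (by linarith) (by positivity)
  have hθ₁ : 0 ≤ 1 - θ := by
    rw [hθ, sub_nonneg, div_le_one (by positivity)]
    linarith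
  have hcomb : θ * (a + b) ^ 2 + (1 - θ) * (a - b) ^ 2 = a ^ 2 + b ^ 2 + 2 * c := by
    rw [hθ]
    field_simp
    ring
  have hconv := (convexOn_cosh_mul_sqrt hl).2 (mem_Ici.2 (sq_nonneg (a + b)))
    (mem_Ici.2 (sq_nonneg (a - b))) hθ₀ hθ₁ (by ring)
  simp only [smul_eq_mul] at hconv
  have hcosh_abs : cosh (l * |a - b|) = cosh (l * (a - b)) := by
    rw [← cosh_abs (l * (a - b)), abs_mul, abs_of_nonneg hl]
  rw [hcomb, sqrt_sq (by positivity), sqrt_sq_eq_abs, hcosh_abs, mul_add, mul_sub, cosh_add,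
    cosh_sub] at hconv
  refine hconv.trans_eq ?_
  rw [hθ]
  field_simp
  ring

lemma integrable_cosh_mul_norm {Ω E : Type*} [MeasurableSpace Ω] {μ : Measure Ω}
    [IsFiniteMeasure μ] [SeminormedAddCommGroup E] {f : Ω → E} (hf : AEStronglyMeasurable f μ)
    (l : ℝ) {K : ℝ} (hK : ∀ᵐ ω ∂μ, ‖f ω‖ ≤ K) :
    Integrable (fun ω => cosh (l * ‖f ω‖)) μ := by
  refine .of_bound (by fun_prop) (cosh (l * K)) ?_
  filter_upwards [hK] with ω hω
  rw [norm_of_nonneg (cosh_pos _).le, cosh_le_cosh, abs_mul, abs_mul, abs_norm]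
  exact mul_le_mul_of_nonneg_left (hω.trans (le_abs_self K)) (abs_nonneg l)

lemma ae_norm_sum_le {Ω ι E : Type*} [MeasurableSpace Ω] {μ : Measure Ω}
    [SeminormedAddCommGroup E] {Y : ι → Ω → E} {b : ℝ} (hY : ∀ i, ∀ᵐ ω ∂μ, ‖Y i ω‖ ≤ b)
    (s : Finset ι) : ∀ᵐ ω ∂μ, ‖∑ i ∈ s, Y i ω‖ ≤ s.card * b := by
  filter_upwards [s.eventually_all.2 fun i _ => hY i] with ω hω
  simpa using norm_sum_le_of_le s hω

lemma ofReal_one_sub_le_of_measureReal_compl_le {α : Type*} [MeasurableSpace α] {μ : Measure α}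
    [IsProbabilityMeasure μ] {s : Set α} {δ : ℝ} (h : μ.real sᶜ ≤ δ) :
    ENNReal.ofReal (1 - δ) ≤ μ s := by
  have hunion : 1 ≤ μ.real s + μ.real sᶜ := by
    simpa [union_compl_self] using measureReal_union_le (μ := μ) s sᶜ
  rw [ENNReal.ofReal_le_iff_le_toReal (measure_ne_top μ s), ← measureReal_def]
  linarith

section InnerProductSpace

variable {H : Type*} [NormedAddCommGroup H] [InnerProductSpace ℝ H]

lemma cosh_mul_norm_add_le (x y : H) {l b : ℝ} (hl : 0 ≤ l) (hb : 0 < b) (hy : ‖y‖ ≤ b) :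
    cosh (l * ‖x + y‖) ≤ cosh (l * ‖x‖) * cosh (l * b) +
      ⟪x, y⟫ * (sinh (l * ‖x‖) * sinh (l * b) / (‖x‖ * b)) := by
  rcases eq_or_ne x 0 with rfl | hx
  · simpa using cosh_mul_le_cosh_mul hl (norm_nonneg y) hy
  have hxy : |⟪x, y⟫| ≤ ‖x‖ * b :=
    (abs_real_inner_le_norm x y).trans (mul_le_mul_of_nonneg_left hy (norm_nonneg x))
  refine le_trans (cosh_mul_le_cosh_mul hl (norm_nonneg _) ?_)
    (cosh_mul_sqrt_le hl (norm_pos_iff.2 hx) hb hxy)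
  have hy2 : ‖y‖ ^ 2 ≤ b ^ 2 := by gcongr
  rw [← sqrt_sq (norm_nonneg (x + y)), norm_add_sq_real]
  exact sqrt_le_sqrt (by linarith)

variable [MeasurableSpace H] [BorelSpace H] [SecondCountableTopology H] [CompleteSpace H]

lemma integral_cosh_mul_norm_add_le {ν : Measure H} [IsProbabilityMeasure ν] {l b : ℝ}
    (hl : 0 ≤ l) (hb : 0 < b) (hν : ∀ᵐ y ∂ν, ‖y‖ ≤ b) (hmean : ∫ y, y ∂ν = 0) (x : H) :
    ∫ y, cosh (l * ‖x + y‖) ∂ν ≤ cosh (l * ‖x‖) * cosh (l * b) := by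
  have hid : Integrable id ν := .of_bound aestronglyMeasurable_id b hν
  have hinner : Integrable (fun y => ⟪x, y⟫) ν := (innerSL ℝ x).integrable_comp hid
  set D := sinh (l * ‖x‖) * sinh (l * b) / (‖x‖ * b)
  have hsum : Integrable (fun y => cosh (l * ‖x‖) * cosh (l * b) + ⟪x, y⟫ * D) ν :=
    (integrable_const _).add (hinner.mul_const D)
  calc ∫ y, cosh (l * ‖x + y‖) ∂ν
      ≤ ∫ y, (cosh (l * ‖x‖) * cosh (l * b) + ⟪x, y⟫ * D) ∂ν := by
        refine integral_mono_ae ?_ hsum ?_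
        · refine integrable_cosh_mul_norm (by fun_prop) l (K := ‖x‖ + b) ?_
          filter_upwards [hν] with y hy
          exact (norm_add_le x y).trans (by linarith)
        · filter_upwards [hν] with y hy
          exact cosh_mul_norm_add_le x y hl hb hy
    _ = cosh (l * ‖x‖) * cosh (l * b) := by
        have hinner_mean : ∫ y, ⟪x, y⟫ ∂ν = ⟪x, ∫ y, y ∂ν⟫ := integral_inner hid x
        rw [integral_add (integrable_const _) (hinner.mul_const D), integral_mul_const D,
          hinner_mean, hmean]
        simp

lemma integral_cosh_mul_norm_add_le_of_indepFun {Ω : Type*} [MeasurableSpace Ω]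
    {P : Measure Ω} [IsProbabilityMeasure P] {A B : Ω → H} (hA : Measurable A)
    (hB : Measurable B) (hAB : IndepFun A B P) {l b K : ℝ} (hl : 0 ≤ l) (hb : 0 < b)
    (hAK : ∀ᵐ ω ∂P, ‖A ω‖ ≤ K) (hBb : ∀ᵐ ω ∂P, ‖B ω‖ ≤ b) (hBmean : ∫ ω, B ω ∂P = 0) :
    ∫ ω, cosh (l * ‖A ω + B ω‖) ∂P ≤ (∫ ω, cosh (l * ‖A ω‖) ∂P) * cosh (l * b) := by
  have hconv : P.map (A + B) = P.map A ∗ P.map B := hAB.map_add_eq_map_conv_map hA hB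
  have hcont : Continuous fun x : H => cosh (l * ‖x‖) := by fun_prop
  have hAB_int : Integrable (fun x : H => cosh (l * ‖x‖)) (P.map (A + B)) := by
    refine (integrable_map_measure (by fun_prop) (hA.add hB).aemeasurable).2 ?_
    refine integrable_cosh_mul_norm (hA.add hB).aestronglyMeasurable l (K := K + b) ?_
    filter_upwards [hAK, hBb] with ω hAω hBω
    exact (norm_add_le _ _).trans (add_le_add hAω hBω)
  have hA_int : Integrable (fun x : H => cosh (l * ‖x‖)) (P.map A) :=
    (integrable_map_measure (by fun_prop) hA.aemeasurable).2
      (integrable_cosh_mul_norm hA.aestronglyMeasurable l hAK)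
  have := Measure.isProbabilityMeasure_map (μ := P) hB.aemeasurable
  have hBb' : ∀ᵐ y ∂P.map B, ‖y‖ ≤ b :=
    (ae_map_iff hB.aemeasurable (measurableSet_le (by fun_prop) (by fun_prop))).2 hBb
  have hBmean' : ∫ y, y ∂P.map B = 0 :=
    (integral_map hB.aemeasurable aestronglyMeasurable_id).trans hBmean
  calc ∫ ω, cosh (l * ‖A ω + B ω‖) ∂P
      = ∫ x, cosh (l * ‖x‖) ∂P.map (A + B) :=
        (integral_map (hA.add hB).aemeasurable hcont.aestronglyMeasurable).symm
    _ = ∫ a, ∫ y, cosh (l * ‖a + y‖) ∂P.map B ∂P.map A := by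
        rw [hconv, integral_conv (hconv ▸ hAB_int)]
    _ ≤ ∫ a, cosh (l * ‖a‖) * cosh (l * b) ∂P.map A :=
        integral_mono_of_nonneg (.of_forall fun a => integral_nonneg fun y => (cosh_pos _).le)
          (hA_int.mul_const _)
          (.of_forall fun a => integral_cosh_mul_norm_add_le hl hb hBb' hBmean' a)
    _ = (∫ ω, cosh (l * ‖A ω‖) ∂P) * cosh (l * b) := by
        rw [integral_mul_const, integral_map hA.aemeasurable hcont.aestronglyMeasurable]

variable {Ω ι : Type*} [MeasurableSpace Ω] {P : Measure Ω} [IsProbabilityMeasure P]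
  {Y : ι → Ω → H} {b : ℝ}

lemma integral_cosh_mul_norm_sum_le (hmeas : ∀ i, Measurable (Y i)) (hindep : iIndepFun Y P)
    {l : ℝ} (hl : 0 ≤ l) (hb : 0 < b) (hY : ∀ i, ∀ᵐ ω ∂P, ‖Y i ω‖ ≤ b)
    (hmean : ∀ i, ∫ ω, Y i ω ∂P = 0) (s : Finset ι) :
    ∫ ω, cosh (l * ‖∑ i ∈ s, Y i ω‖) ∂P ≤ cosh (l * b) ^ s.card := by
  classical
  induction s using Finset.induction_on with
  | empty => simp
  | insert i s hi ih =>
    have hindep_step : IndepFun (fun ω => ∑ j ∈ s, Y j ω) (Y i) P := by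
      simpa [Finset.sum_fn] using hindep.indepFun_finsetSum_of_notMem hmeas hi
    have hstep := integral_cosh_mul_norm_add_le_of_indepFun
      (Finset.measurable_sum s fun j _ => hmeas j) (hmeas i) hindep_step hl hb
      (ae_norm_sum_le hY s) (hY i) (hmean i)
    simp_rw [Finset.sum_insert hi, add_comm (Y i _), Finset.card_insert_of_notMem hi, pow_succ]
    exact hstep.trans (mul_le_mul_of_nonneg_right ih (cosh_pos _).le)

lemma measureReal_lt_norm_sum_le_exp (hmeas : ∀ i, Measurable (Y i)) (hindep : iIndepFun Y P)
    {l : ℝ} (hl : 0 ≤ l) (hb : 0 < b) (hY : ∀ i, ∀ᵐ ω ∂P, ‖Y i ω‖ ≤ b)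
    (hmean : ∀ i, ∫ ω, Y i ω ∂P = 0) (s : Finset ι) (r : ℝ) (hr : 0 ≤ r) :
    P.real {ω | r < ‖∑ i ∈ s, Y i ω‖} ≤ 2 * exp (s.card * (l * b) ^ 2 / 2 - l * r) := by
  have hint : Integrable (fun ω => cosh (l * ‖∑ i ∈ s, Y i ω‖)) P :=
    integrable_cosh_mul_norm (Finset.measurable_sum s fun i _ => hmeas i).aestronglyMeasurable l
      (ae_norm_sum_le hY s)
  have hmarkov := mul_meas_ge_le_integral_of_nonneg (.of_forall fun ω => (cosh_pos _).le) hint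
    (cosh (l * r))
  have hsub : {ω | r < ‖∑ i ∈ s, Y i ω‖} ⊆ {ω | cosh (l * r) ≤ cosh (l * ‖∑ i ∈ s, Y i ω‖)} :=
    fun ω hω => cosh_mul_le_cosh_mul hl hr (le_of_lt hω)
  have hexp : exp (l * r) / 2 ≤ cosh (l * r) := by
    rw [cosh_eq]
    linarith [exp_pos (-(l * r))]
  have hpow : cosh (l * b) ^ s.card ≤ exp (s.card * (l * b) ^ 2 / 2) := by
    rw [mul_div_assoc, exp_nat_mul]
    exact pow_le_pow_left₀ (cosh_pos _).le (cosh_le_exp_half_sq _) _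
  calc P.real {ω | r < ‖∑ i ∈ s, Y i ω‖}
      ≤ P.real {ω | cosh (l * r) ≤ cosh (l * ‖∑ i ∈ s, Y i ω‖)} := measureReal_mono hsub
    _ ≤ cosh (l * b) ^ s.card / cosh (l * r) := by
        rw [le_div_iff₀ (cosh_pos _), mul_comm]
        exact hmarkov.trans (integral_cosh_mul_norm_sum_le hmeas hindep hl hb hY hmean s)
    _ ≤ exp (s.card * (l * b) ^ 2 / 2) / (exp (l * r) / 2) := by gcongr
    _ = 2 * exp (s.card * (l * b) ^ 2 / 2 - l * r) := by
        rw [exp_sub]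
        ring

theorem measureReal_lt_norm_sum_le (hmeas : ∀ i, Measurable (Y i)) (hindep : iIndepFun Y P)
    (hb : 0 < b) (hY : ∀ i, ∀ᵐ ω ∂P, ‖Y i ω‖ ≤ b) (hmean : ∀ i, ∫ ω, Y i ω ∂P = 0)
    (s : Finset ι) (r : ℝ) (hr : 0 ≤ r) :
    P.real {ω | r < ‖∑ i ∈ s, Y i ω‖} ≤ 2 * exp (-r ^ 2 / (2 * s.card * b ^ 2)) := by
  rcases s.eq_empty_or_nonempty with rfl | hs
  · simp [not_lt.2 hr]
  convert measureReal_lt_norm_sum_le_exp hmeas hindep (l := r / (s.card * b ^ 2))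
    (by positivity) hb hY hmean s r hr using 3
  have : (s.card : ℝ) ≠ 0 := by simp [hs.ne_empty]
  field_simp
  ring

theorem measureReal_lt_norm_average_sub_le [Fintype ι] [Nonempty ι] {ξ : ι → Ω → H} {m : H}
    (hmeas : ∀ i, Measurable (ξ i)) (hindep : iIndepFun ξ P) (hmean : ∀ i, ∫ ω, ξ i ω ∂P = m)
    {κ : ℝ} (hκ : 0 < κ) (hξ : ∀ i, ∀ᵐ ω ∂P, ‖ξ i ω‖ ≤ κ) (t : ℝ) (ht : 0 ≤ t) :
    P.real {ω | t < ‖(Fintype.card ι : ℝ)⁻¹ • ∑ i, ξ i ω - m‖} ≤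
      2 * exp (-(Fintype.card ι * t ^ 2 / (8 * κ ^ 2))) := by
  have hn : (0 : ℝ) < Fintype.card ι := Nat.cast_pos.2 Fintype.card_pos
  have hm : ‖m‖ ≤ κ := by
    obtain ⟨i⟩ := ‹Nonempty ι›
    simpa [← hmean i] using norm_integral_le_of_norm_le_const (hξ i)
  have hY : ∀ i, ∀ᵐ ω ∂P, ‖ξ i ω - m‖ ≤ 2 * κ := fun i => by
    filter_upwards [hξ i] with ω hω
    linarith [norm_sub_le (ξ i ω) m]
  have hYmean (i : ι) : ∫ ω, ξ i ω - m ∂P = 0 := by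
    rw [integral_sub (.of_bound (hmeas i).aestronglyMeasurable κ (hξ i)) (integrable_const m),
      hmean i, integral_const]
    simp
  have hset : {ω | t < ‖(Fintype.card ι : ℝ)⁻¹ • ∑ i, ξ i ω - m‖} =
      {ω | Fintype.card ι * t < ‖∑ i, (ξ i ω - m)‖} := by
    ext ω
    rw [mem_ofPred_eq, mem_ofPred_eq, Finset.sum_sub_distrib, Finset.sum_const, Finset.card_univ,
      ← Nat.cast_smul_eq_nsmul ℝ, ← inv_smul_smul₀ hn.ne' m, ← smul_sub, norm_smul,
      inv_smul_smul₀ hn.ne', norm_inv, norm_of_nonneg hn.le, lt_inv_mul_iff₀ hn]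
  rw [hset]
  convert measureReal_lt_norm_sum_le (Y := fun i ω => ξ i ω - m)
    (fun i => (hmeas i).sub measurable_const)
    (hindep.comp _ fun _ => measurable_id.sub measurable_const) (by positivity) hY hYmean
    Finset.univ (Fintype.card ι * t) (by positivity) using 3
  rw [Finset.card_univ]
  field_simp
  ring

end InnerProductSpace

lemma two_mul_exp_neg_two_mul_log_sq_le {δ : ℝ} (hδ₀ : 0 < δ) (hδ₁ : δ ≤ 1) :
    2 * exp (-(2 * log (2 / δ) ^ 2)) ≤ δ := by
  have hL : 1 / 2 ≤ log (2 / δ) :=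
    calc 1 / 2 ≤ log 2 := by linarith [log_two_gt_d9]
      _ ≤ log (2 / δ) := log_le_log two_pos (by rw [le_div_iff₀ hδ₀]; linarith)
  calc 2 * exp (-(2 * log (2 / δ) ^ 2)) ≤ 2 * exp (-log (2 / δ)) := by
        gcongr
        nlinarith
    _ = δ := by
        rw [exp_neg, exp_log (by positivity)]
        field_simp

/-- **Concentration of the empirical kernel mean embedding (Bennett-type bound).**
Let `ξ₁, …, ξₙ` be i.i.d. random variables with values in a separable Hilbert space `H`,
bounded by `κ` almost surely.  Then for every `δ ∈ (0,1)`, with probability at least `1 - δ`,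
`‖(1/n) ∑ᵢ ξᵢ - E[ξ₁]‖ ≤ 4 κ log(2/δ) / √n`.  In particular the empirical kernel mean
embedding of i.i.d. samples built from a bounded feature map satisfies this bound. -/
theorem kernel_mean_embedding_rate
    {Ω H : Type*} [MeasurableSpace Ω]
    [NormedAddCommGroup H] [InnerProductSpace ℝ H] [CompleteSpace H]
    [SecondCountableTopology H] [MeasurableSpace H] [BorelSpace H]
    (P : Measure Ω) [IsProbabilityMeasure P]
    (n : ℕ) (hn : 0 < n)
    (ξ : Fin n → Ω → H)
    (hmeas : ∀ i, Measurable (ξ i))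
    (hindep : iIndepFun ξ P)
    (hident : ∀ i, IdentDistrib (ξ i) (ξ ⟨0, hn⟩) P P)
    (κ : ℝ) (hκ : 0 < κ)
    (hbound : ∀ i, ∀ᵐ ω ∂P, ‖ξ i ω‖ ≤ κ)
    (δ : ℝ) (hδ : δ ∈ Set.Ioo (0 : ℝ) 1) :
    ENNReal.ofReal (1 - δ) ≤
      P {ω | ‖(n : ℝ)⁻¹ • ∑ i, ξ i ω - ∫ ω', ξ ⟨0, hn⟩ ω' ∂P‖
              ≤ 4 * κ * Real.log (2 / δ) / Real.sqrt n} := by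
  obtain ⟨hδ₀, hδ₁⟩ := hδ
  have : Nonempty (Fin n) := ⟨⟨0, hn⟩⟩
  have hL : 0 ≤ log (2 / δ) := log_nonneg (by rw [le_div_iff₀ hδ₀]; linarith)
  have htail := measureReal_lt_norm_average_sub_le hmeas hindep
    (fun i => (hident i).integral_eq) hκ hbound (4 * κ * log (2 / δ) / √n) (by positivity)
  have hexponent : (n : ℝ) * (4 * κ * log (2 / δ) / √n) ^ 2 / (8 * κ ^ 2) =
      2 * log (2 / δ) ^ 2 := by
    rw [div_pow, sq_sqrt (Nat.cast_nonneg n)]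
    field_simp
    ring
  rw [Fintype.card_fin, hexponent] at htail
  refine ofReal_one_sub_le_of_measureReal_compl_le ?_
  simp only [compl_ofPred, not_le]
  exact htail.trans (two_mul_exp_neg_two_mul_log_sq_le hδ₀ hδ₁.le)
end

section
/- Let Z be a measurable space, ρ_Z a σ-finite measure on Z, y : Z → 𝒴 measurable, φ : 𝒴 → H_Y a measurable feature map with sup ‖φ‖ ≤ κ, and w : Z → ℝ measurable with |w(z)| ≤ W for all z. Let P and P̃ be probability measures on Z, both absolutely continuous with respect to ρ_Z, with densities p and p̃. Then ‖∫ w(z) φ(y(z)) dP(z) − ∫ w(z) φ(y(z)) dP̃(z)‖_{H_Y} ≤ 2 W κ · H(P, P̃), where H(P, P̃) := (∫ (√p − √p̃)² dρ_Z)^{1/2} is the Hellinger distance. In particular, with w(z) = π(a|x)/π0(a|x) bounded by W = sup π / inf π0, the counterfactual policy mean embedding P ↦ χ(π)(P) is Lipschitz in Hellinger distance over the model with fixed propensity π0. -/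
/-!
Writing `P = p ρ` and `P̃ = p̃ ρ`, the difference of the two embeddings is
`∫ (p - p̃) • w φ(y) dρ`, of norm at most `W κ ∫ |p - p̃| dρ`. Factoring
`p - p̃ = (√p - √p̃)(√p + √p̃)`, Cauchy–Schwarz bounds `∫ |p - p̃|` by `H(P, P̃) ‖√p + √p̃‖₂`,
and `‖√p + √p̃‖₂² ≤ 2 ∫ (p + p̃) = 4`.
-/

open MeasureTheory

section
variable {Z : Type*} [MeasurableSpace Z] {μ : Measure Z}

theorem integral_mul_le_sqrt_mul_sqrt_of_nonneg {f g : Z → ℝ} (hf0 : 0 ≤ᵐ[μ] f)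
    (hg0 : 0 ≤ᵐ[μ] g) (hf : MemLp f 2 μ) (hg : MemLp g 2 μ) :
    ∫ z, f z * g z ∂μ ≤ √(∫ z, f z ^ 2 ∂μ) * √(∫ z, g z ^ 2 ∂μ) := by
  have := integral_mul_le_Lp_mul_Lq_of_nonneg Real.HolderConjugate.two_two hf0 hg0
    (by simpa using hf) (by simpa using hg)
  simpa only [Real.rpow_two, ← Real.sqrt_eq_rpow] using this

variable {p q : Z → ℝ}

theorem lintegral_ofReal_eq_one_of_isProbabilityMeasure_withDensity
    [IsProbabilityMeasure (μ.withDensity fun z => ENNReal.ofReal (p z))] :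
    ∫⁻ z, ENNReal.ofReal (p z) ∂μ = 1 := by
  have h := measure_univ (μ := μ.withDensity fun z => ENNReal.ofReal (p z))
  rwa [withDensity_apply _ .univ, Measure.restrict_univ] at h

theorem integrable_of_isProbabilityMeasure_withDensity (hp : AEMeasurable p μ)
    (hp0 : 0 ≤ᵐ[μ] p) [IsProbabilityMeasure (μ.withDensity fun z => ENNReal.ofReal (p z))] :
    Integrable p μ := by
  refine ⟨hp.aestronglyMeasurable, (hasFiniteIntegral_iff_ofReal hp0).2 ?_⟩
  rw [lintegral_ofReal_eq_one_of_isProbabilityMeasure_withDensity]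
  exact ENNReal.one_lt_top

theorem integral_eq_one_of_isProbabilityMeasure_withDensity (hp : AEMeasurable p μ)
    (hp0 : 0 ≤ᵐ[μ] p) [IsProbabilityMeasure (μ.withDensity fun z => ENNReal.ofReal (p z))] :
    ∫ z, p z ∂μ = 1 := by
  rw [integral_eq_lintegral_of_nonneg_ae hp0 hp.aestronglyMeasurable,
    lintegral_ofReal_eq_one_of_isProbabilityMeasure_withDensity, ENNReal.toReal_one]

theorem integral_withDensity_ofReal_eq_integral_smul {E : Type*} [NormedAddCommGroup E]
    [NormedSpace ℝ E] (hp : AEMeasurable p μ) (hp0 : 0 ≤ᵐ[μ] p) (g : Z → E) :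
    ∫ z, g z ∂μ.withDensity (fun z => ENNReal.ofReal (p z)) = ∫ z, p z • g z ∂μ := by
  rw [integral_withDensity_eq_integral_toReal_smul₀ hp.ennreal_ofReal
    (.of_forall fun _ => ENNReal.ofReal_lt_top)]
  refine integral_congr_ae ?_
  filter_upwards [hp0] with z hz
  rw [ENNReal.toReal_ofReal hz]

theorem norm_integral_withDensity_sub_le {E : Type*} [NormedAddCommGroup E] [NormedSpace ℝ E]
    {g : Z → E} {C : ℝ} (hp : Integrable p μ) (hq : Integrable q μ) (hp0 : 0 ≤ᵐ[μ] p)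
    (hq0 : 0 ≤ᵐ[μ] q) (hg : AEStronglyMeasurable g μ) (hgC : ∀ᵐ z ∂μ, ‖g z‖ ≤ C) :
    ‖∫ z, g z ∂μ.withDensity (fun z => ENNReal.ofReal (p z))
        - ∫ z, g z ∂μ.withDensity (fun z => ENNReal.ofReal (q z))‖
      ≤ C * ∫ z, |p z - q z| ∂μ := by
  have hg_top : MemLp g ⊤ μ := memLp_top_of_bound hg C hgC
  have hpg : Integrable (fun z => p z • g z) μ := hp.smul_of_top_left hg_top
  have hqg : Integrable (fun z => q z • g z) μ := hq.smul_of_top_left hg_top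
  rw [integral_withDensity_ofReal_eq_integral_smul hp.aemeasurable hp0,
    integral_withDensity_ofReal_eq_integral_smul hq.aemeasurable hq0,
    ← integral_sub hpg hqg, ← integral_const_mul]
  refine norm_integral_le_of_norm_le ((hp.sub hq).abs.const_mul C) ?_
  filter_upwards [hgC] with z hz
  rw [← sub_smul, norm_smul, Real.norm_eq_abs, mul_comm C]
  exact mul_le_mul_of_nonneg_left hz (abs_nonneg _)

theorem integral_abs_sub_le_sqrt_mul_sqrt (hp : Integrable p μ) (hq : Integrable q μ)
    (hp0 : 0 ≤ᵐ[μ] p) (hq0 : 0 ≤ᵐ[μ] q) :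
    ∫ z, |p z - q z| ∂μ
      ≤ √(∫ z, (√(p z) - √(q z)) ^ 2 ∂μ) * √(2 * (∫ z, p z ∂μ + ∫ z, q z ∂μ)) := by
  set d : Z → ℝ := fun z => |√(p z) - √(q z)|
  set s : Z → ℝ := fun z => √(p z) + √(q z)
  have hsqrt_p : AEStronglyMeasurable (fun z => √(p z)) μ :=
    hp.aemeasurable.sqrt.aestronglyMeasurable
  have hsqrt_q : AEStronglyMeasurable (fun z => √(q z)) μ :=
    hq.aemeasurable.sqrt.aestronglyMeasurable
  have hd_sq : ∀ᵐ z ∂μ, ‖d z ^ 2‖ ≤ p z + q z := by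
    filter_upwards [hp0, hq0] with z hpz hqz
    rw [Real.norm_of_nonneg (sq_nonneg _), sq_abs]
    nlinarith [Real.sq_sqrt hpz, Real.sq_sqrt hqz, Real.sqrt_nonneg (p z),
      Real.sqrt_nonneg (q z)]
  have hs_sq : ∀ᵐ z ∂μ, s z ^ 2 ≤ 2 * (p z + q z) := by
    filter_upwards [hp0, hq0] with z hpz hqz
    simpa only [Real.sq_sqrt hpz, Real.sq_sqrt hqz] using add_sq_le (a := √(p z)) (b := √(q z))
  have hs_sq_int : Integrable (fun z => s z ^ 2) μ := by
    refine ((hp.add hq).const_mul 2).mono' ((hsqrt_p.add hsqrt_q).pow 2) ?_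
    filter_upwards [hs_sq] with z hz
    rwa [Real.norm_of_nonneg (sq_nonneg _)]
  have hd2 : MemLp d 2 μ := (memLp_two_iff_integrable_sq (hsqrt_p.sub hsqrt_q).norm).2
    ((hp.add hq).mono' ((hsqrt_p.sub hsqrt_q).norm.pow 2) hd_sq)
  have hs2 : MemLp s 2 μ := (memLp_two_iff_integrable_sq (hsqrt_p.add hsqrt_q)).2 hs_sq_int
  have hfactor : ∀ᵐ z ∂μ, |p z - q z| = d z * s z := by
    filter_upwards [hp0, hq0] with z hpz hqz
    simp only [d, s]
    rw [← abs_of_nonneg (add_nonneg (Real.sqrt_nonneg (p z)) (Real.sqrt_nonneg (q z))),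
      ← abs_mul, mul_comm, ← sq_sub_sq, Real.sq_sqrt hpz, Real.sq_sqrt hqz]
  calc ∫ z, |p z - q z| ∂μ = ∫ z, d z * s z ∂μ := integral_congr_ae hfactor
    _ ≤ √(∫ z, d z ^ 2 ∂μ) * √(∫ z, s z ^ 2 ∂μ) :=
        integral_mul_le_sqrt_mul_sqrt_of_nonneg (.of_forall fun z => abs_nonneg _)
          (.of_forall fun z => add_nonneg (Real.sqrt_nonneg _) (Real.sqrt_nonneg _)) hd2 hs2
    _ ≤ √(∫ z, (√(p z) - √(q z)) ^ 2 ∂μ) * √(2 * (∫ z, p z ∂μ + ∫ z, q z ∂μ)) := by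
        simp only [d, sq_abs]
        gcongr
        rw [← integral_add hp hq, ← integral_const_mul]
        exact integral_mono_ae hs_sq_int ((hp.add hq).const_mul 2) hs_sq

end

theorem cpme_hellinger_lipschitz_general
    {Z 𝒴 H : Type*} [MeasurableSpace Z] [MeasurableSpace 𝒴]
    [NormedAddCommGroup H] [InnerProductSpace ℝ H]
    (ρZ : Measure Z)
    (y : Z → 𝒴) (hy : Measurable y)
    (φ : 𝒴 → H) (hφmeas : StronglyMeasurable φ)
    (κ : ℝ) (hφκ : ∀ v, ‖φ v‖ ≤ κ)
    (w : Z → ℝ) (hw : Measurable w)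
    (W : ℝ) (hwW : ∀ z, |w z| ≤ W)
    (p ptilde : Z → ℝ) (hp : Measurable p) (hptilde : Measurable ptilde)
    (hp0 : ∀ z, 0 ≤ p z) (hptilde0 : ∀ z, 0 ≤ ptilde z)
    (P Ptilde : Measure Z) [IsProbabilityMeasure P] [IsProbabilityMeasure Ptilde]
    (hP : P = ρZ.withDensity fun z => ENNReal.ofReal (p z))
    (hPtilde : Ptilde = ρZ.withDensity fun z => ENNReal.ofReal (ptilde z)) :
    ‖(∫ z, w z • φ (y z) ∂P) - ∫ z, w z • φ (y z) ∂Ptilde‖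
      ≤ 2 * W * κ *
        Real.sqrt (∫ z, (Real.sqrt (p z) - Real.sqrt (ptilde z)) ^ 2 ∂ρZ) := by
  obtain ⟨z₀⟩ := nonempty_of_isProbabilityMeasure P
  subst hP hPtilde
  have hp0' : 0 ≤ᵐ[ρZ] p := .of_forall hp0
  have hptilde0' : 0 ≤ᵐ[ρZ] ptilde := .of_forall hptilde0
  have hp_int := integrable_of_isProbabilityMeasure_withDensity hp.aemeasurable hp0'
  have hptilde_int := integrable_of_isProbabilityMeasure_withDensity hptilde.aemeasurable hptilde0'
  have hg_bound : ∀ z, ‖w z • φ (y z)‖ ≤ W * κ := fun z => by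
    rw [norm_smul, Real.norm_eq_abs]
    exact mul_le_mul (hwW z) (hφκ _) (norm_nonneg _) ((abs_nonneg _).trans (hwW z))
  have hL1 := integral_abs_sub_le_sqrt_mul_sqrt hp_int hptilde_int hp0' hptilde0'
  rw [integral_eq_one_of_isProbabilityMeasure_withDensity hp.aemeasurable hp0',
    integral_eq_one_of_isProbabilityMeasure_withDensity hptilde.aemeasurable hptilde0',
    show √(2 * (1 + 1) : ℝ) = 2 by norm_num] at hL1
  calc _ ≤ W * κ * ∫ z, |p z - ptilde z| ∂ρZ :=
        norm_integral_withDensity_sub_le hp_int hptilde_int hp0' hptilde0'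
          (hw.stronglyMeasurable.smul (hφmeas.comp_measurable hy)).aestronglyMeasurable
          (.of_forall hg_bound)
    _ ≤ W * κ * (√(∫ z, (√(p z) - √(ptilde z)) ^ 2 ∂ρZ) * 2) :=
        mul_le_mul_of_nonneg_left hL1 ((norm_nonneg _).trans (hg_bound z₀))
    _ = _ := by ring

/-- **Hellinger Lipschitzness of importance-weighted mean embeddings.**
Let `ρZ` be a σ-finite measure on `Z`, `y : Z → 𝒴` measurable, `φ : 𝒴 → H` a bounded
measurable feature map with `‖φ‖ ≤ κ`, and `w : Z → ℝ` measurable with `|w| ≤ W`.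
If `P` and `P̃` are probability measures with densities `p`, `p̃` w.r.t. `ρZ`, then
`‖∫ w φ(y(·)) dP - ∫ w φ(y(·)) dP̃‖ ≤ 2 W κ H(P, P̃)` where
`H(P,P̃) = (∫ (√p - √p̃)² dρZ)^{1/2}` is the Hellinger distance.  With
`w = π/π0` this says the counterfactual policy mean embedding is Lipschitz in Hellinger
distance over the model with fixed propensity `π0`. -/
theorem cpme_hellinger_lipschitz
    {Z 𝒴 H : Type*} [MeasurableSpace Z] [MeasurableSpace 𝒴]
    [NormedAddCommGroup H] [InnerProductSpace ℝ H] [CompleteSpace H]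
    [SecondCountableTopology H]
    (ρZ : Measure Z) [SigmaFinite ρZ]
    (y : Z → 𝒴) (hy : Measurable y)
    (φ : 𝒴 → H) (hφmeas : StronglyMeasurable φ)
    (κ : ℝ) (hφκ : ∀ v, ‖φ v‖ ≤ κ)
    (w : Z → ℝ) (hw : Measurable w)
    (W : ℝ) (hwW : ∀ z, |w z| ≤ W)
    (p ptilde : Z → ℝ) (hp : Measurable p) (hptilde : Measurable ptilde)
    (hp0 : ∀ z, 0 ≤ p z) (hptilde0 : ∀ z, 0 ≤ ptilde z)
    (P Ptilde : Measure Z) [IsProbabilityMeasure P] [IsProbabilityMeasure Ptilde]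
    (hP : P = ρZ.withDensity fun z => ENNReal.ofReal (p z))
    (hPtilde : Ptilde = ρZ.withDensity fun z => ENNReal.ofReal (ptilde z)) :
    ‖(∫ z, w z • φ (y z) ∂P) - ∫ z, w z • φ (y z) ∂Ptilde‖
      ≤ 2 * W * κ *
        Real.sqrt (∫ z, (Real.sqrt (p z) - Real.sqrt (ptilde z)) ^ 2 ∂ρZ) :=
  cpme_hellinger_lipschitz_general ρZ y hy φ hφmeas κ hφκ w hw W hwW p ptilde hp hptilde hp0
    hptilde0 P Ptilde hP hPtilde
end
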